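/- The leading Fourier–Jacobi coefficient of 1/χ₁₀ is the Katz–Klemm–Vafa series: writing 1/χ₁₀ = Σ_{n ≥ −1} ψ_n q̃^n with ψ_n ∈ q^{-1}·A[[q]], one has ψ_{−1} = −1/(Fsq · Δ); equivalently ψ_{−1} · Fsq · Δ = −1. -/

import Mathlib

noncomputable section

/-- The coefficient field `A = ℚ((p))` of formal Laurent series in `p`. -/
abbrev A : Type := LaurentSeries ℚ

/-- The Laurent variable `p ∈ A`. -/
def pL : A := HahnSeries.single 1 1

instance : TopologicalSpace A := ⊥

/-- The product (pi) topology on `R = A⟦q⟧`, coefficientwise. -/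
instance : TopologicalSpace (PowerSeries A) :=
  inferInstanceAs (TopologicalSpace ((Unit →₀ ℕ) → A))

/-- `Fsq`, the formal expansion in `A⟦q⟧` of the square of the Jacobi theta quotient
`F = ϑ₁(z,τ)/η(τ)³` in the region `0 < |q| < |p| < 1`:
`Fsq = −(p − 2 + p⁻¹) ∏_{m ≥ 1} (1 − p q^m)²(1 − p⁻¹ q^m)²(1 − q^m)^{−4}`. -/
def Fsq : PowerSeries A :=
  -(PowerSeries.C (R := A) (pL - 2 + pL⁻¹)) *
    ∏' m : ℕ,
      ((1 - PowerSeries.C (R := A) pL * PowerSeries.X ^ (m + 1)) ^ 2 *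
       (1 - PowerSeries.C (R := A) pL⁻¹ * PowerSeries.X ^ (m + 1)) ^ 2 *
       Ring.inverse ((1 - (PowerSeries.X : PowerSeries A) ^ (m + 1)) ^ 4))

/-- `∑_{k ≥ 1} k p^k ∈ A`, the expansion of `p/(1−p)²`. -/
def sumkpk : A := HahnSeries.ofPowerSeries ℤ ℚ (PowerSeries.mk fun k => (k : ℚ))

/-- The Weierstrass expansion
`℘ = 1/12 + ∑_{k ≥ 1} k p^k + ∑_{k,r ≥ 1} k (p^k − 2 + p^{−k}) q^{kr} ∈ A⟦q⟧`. -/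
def wp : PowerSeries A :=
  PowerSeries.C (R := A) (1 / 12 + sumkpk) +
    ∑' kr : ℕ × ℕ,
      PowerSeries.C (R := A) (((kr.1 + 1 : ℕ) : A) * (pL ^ (kr.1 + 1) - 2 + (pL⁻¹) ^ (kr.1 + 1))) *
        PowerSeries.X ^ ((kr.1 + 1) * (kr.2 + 1))

/-- `Z = −24·℘·Fsq ∈ A⟦q⟧`. -/
def Zjac : PowerSeries A := -24 * wp * Fsq

/-- The product (pi) topology on `A⟦q⟧⟦q̃⟧`, coefficientwise. -/
instance : TopologicalSpace (PowerSeries (PowerSeries A)) :=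
  inferInstanceAs (TopologicalSpace ((Unit →₀ ℕ) → PowerSeries A))

/-- Integer power in a ring (for invertible bases): `x^n` for `n ≥ 0`, and
`(x^{−n})⁻¹` (via `Ring.inverse`) for `n < 0`. -/
def fpow {R : Type*} [CommRing R] (x : R) (n : ℤ) : R :=
  if 0 ≤ n then x ^ n.toNat else Ring.inverse (x ^ (-n).toNat)

/-- The index set of the product defining `χ₁₀`: all `(k,h,d) ∈ ℤ × ℕ × ℕ` with
`h > 0` or `d > 0`, or `h = d = 0` and `k < 0`. -/
def chiIndex : Set (ℤ × ℕ × ℕ) :=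
  {x | 0 < x.2.1 ∨ 0 < x.2.2 ∨ (x.2.1 = 0 ∧ x.2.2 = 0 ∧ x.1 < 0)}

/-- The Igusa cusp form, as the Borcherds-type product
`χ₁₀ = p q q̃ ∏_{(k,h,d)} (1 − p^k q^h q̃^d)^{c(4hd − k²)} ∈ A⟦q,q̃⟧ = A⟦q⟧⟦q̃⟧`,
the product over all `k ∈ ℤ`, `h,d ≥ 0` with (`h > 0` or `d > 0`) or
(`h = d = 0` and `k < 0`). -/
def chi10 (c : ℤ → ℤ) : PowerSeries (PowerSeries A) :=
  PowerSeries.C (R := PowerSeries A) (PowerSeries.C (R := A) pL * PowerSeries.X) * PowerSeries.X *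
    ∏' i : chiIndex,
      fpow
        (1 - PowerSeries.C (R := PowerSeries A) (PowerSeries.C (R := A) (pL ^ (i.1.1 : ℤ)) *
              PowerSeries.X ^ i.1.2.1) * PowerSeries.X ^ i.1.2.2)
        (c (4 * (i.1.2.1 : ℤ) * (i.1.2.2 : ℤ) - (i.1.1) ^ 2))

/-- The discriminant `Δ = q ∏_{n ≥ 1} (1 − q^n)^24 ∈ A⟦q⟧`. -/
def Delta : PowerSeries A :=
  PowerSeries.X * ∏' n : ℕ, (1 - (PowerSeries.X : PowerSeries A) ^ (n + 1)) ^ 24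

/-- `K = A((q))`, the field of formal Laurent series in `q` over `A`. -/
abbrev K : Type := LaurentSeries A

/-- `M = K((q̃))`, the field of formal Laurent series in `q̃` over `K`. -/
abbrev M : Type := LaurentSeries K

noncomputable instance : Field M := @HahnSeries.instField ℤ K _ _ _ _

/-- The inclusion `A⟦q⟧ → K = A((q))`. -/
def ιR : PowerSeries A →+* K := HahnSeries.ofPowerSeries ℤ A

/-- `χ₁₀` viewed in the field `M`, where both `q` and `q̃` are inverted. -/
def chiM (c : ℤ → ℤ) : M :=
  HahnSeries.ofPowerSeries ℤ K (PowerSeries.map ιR (chi10 c))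

/-- The Fourier–Jacobi coefficients `ψ_n ∈ q⁻¹·A⟦q⟧ ⊆ K` of the expansion
`1/χ₁₀ = ∑_{n ≥ −1} ψ_n q̃^n`. -/
def psi (c : ℤ → ℤ) (n : ℤ) : K := ((chiM c)⁻¹).coeff n

/-!
Write `χ₁₀ = p q q̃ · T` with `T` the Borcherds product. In the `q̃`-constant term of `T` only the
factors with `d = 0` survive, and their exponent `c(-k²)` vanishes unless `k ∈ {-1, 0, 1}`. The
constant term `2p + 20 + 2p⁻¹` of `Z` gives `c(-1) = 2` and `c(0) = 20`, so the `q̃¹`-coefficient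
of `χ₁₀` is `p q (1 - p⁻¹)² ∏ₕ (1 - p⁻¹qʰ)²(1 - qʰ)²⁰(1 - pqʰ)² = -Fsq·Δ`. As `χ₁₀` has
`q̃`-order exactly `1`, `ψ₋₁` is the inverse of this coefficient.

All infinite products are handled by truncation: modulo `(q̃ⁿ, qᵐ)` all but finitely many factors
are `≡ 1`, because `c(4hd - k²) = 0` once `4hd - k² < -1`, so partial products stabilise
coefficientwise, and a product is congruent to any partial product containing the factors that
are not `≡ 1`.
-/

open PowerSeries Filter Topology

section IntegerPower

variable {R S : Type*} [CommRing R] [CommRing S]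

theorem fpow_zero (x : R) : fpow x 0 = 1 := by
  simp [fpow]

theorem fpow_of_nonneg (x : R) {n : ℤ} (hn : 0 ≤ n) : fpow x n = x ^ n.toNat := if_pos hn

theorem map_ringInverse (φ : R →+* S) {x : R} (hx : IsUnit x) :
    φ (Ring.inverse x) = Ring.inverse (φ x) := by
  obtain ⟨u, rfl⟩ := hx
  rw [Ring.inverse_unit, show φ u = Units.map (φ : R →* S) u from rfl, Ring.inverse_unit]
  exact (Units.coe_map_inv _ u).symm

theorem Ring.inverse_smodEq_one {I : Ideal R} {x : R} (hx : IsUnit x) (h : x ≡ 1 [SMOD I]) :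
    Ring.inverse x ≡ 1 [SMOD I] := by
  rw [SModEq.idealQuotientMk] at h ⊢
  rw [map_ringInverse _ hx, h, map_one, Ring.inverse_one]

theorem fpow_smodEq_one {I : Ideal R} {x : R} (hx : IsUnit x) (h : x ≡ 1 [SMOD I]) (n : ℤ) :
    fpow x n ≡ 1 [SMOD I] := by
  unfold fpow
  split_ifs
  · simpa using h.pow n.toNat
  · exact Ring.inverse_smodEq_one (hx.pow _) (by simpa using h.pow (-n).toNat)

end IntegerPower

section Congruence

variable {S ι : Type*} [CommRing S] {I : Ideal S} {f : ι → S}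

theorem Finset.prod_smodEq_prod_of_subset {F s : Finset ι} (hFs : F ⊆ s)
    (hf : ∀ i ∉ F, f i ≡ 1 [SMOD I]) : ∏ i ∈ s, f i ≡ ∏ i ∈ F, f i [SMOD I] := by
  classical
  rw [← Finset.prod_sdiff hFs]
  simpa using (SModEq.prod fun i hi => hf i (Finset.mem_sdiff.1 hi).2).mul
    (SModEq.refl (∏ i ∈ F, f i))

theorem HasProd.smodEq_prod [TopologicalSpace S] [IsTopologicalRing S]
    (hI : IsClosed (I : Set S)) {g : S} (hg : HasProd f g) {F : Finset ι}
    (hf : ∀ i ∉ F, f i ≡ 1 [SMOD I]) : g ≡ ∏ i ∈ F, f i [SMOD I] := by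
  have hclosed : IsClosed {x : S | x - ∏ i ∈ F, f i ∈ I} :=
    hI.preimage (continuous_id.sub continuous_const)
  rw [SModEq.sub_mem]
  refine hclosed.mem_of_tendsto hg (eventually_atTop.2 ⟨F, fun s hs => ?_⟩)
  exact SModEq.sub_mem.1 (Finset.prod_smodEq_prod_of_subset hs hf)

end Congruence

namespace PowerSeries

variable {R : Type*} [CommRing R]

theorem mem_span_X_pow_iff {n : ℕ} {f : R⟦X⟧} :
    f ∈ Ideal.span {X ^ n} ↔ ∀ j < n, coeff j f = 0 := by
  rw [Ideal.mem_span_singleton, X_pow_dvd_iff]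

theorem coeff_eq_of_smodEq {n j : ℕ} {f g : R⟦X⟧} (h : f ≡ g [SMOD Ideal.span {X ^ n}])
    (hj : j < n) : coeff j f = coeff j g := by
  rw [SModEq.sub_mem, mem_span_X_pow_iff] at h
  simpa [sub_eq_zero] using h j hj

theorem eq_of_forall_smodEq {f g : R⟦X⟧} (h : ∀ n, f ≡ g [SMOD Ideal.span {X ^ n}]) :
    f = g :=
  ext fun j => coeff_eq_of_smodEq (h (j + 1)) j.lt_succ_self

theorem isUnit_one_sub_C_mul_X_pow (u : R) {k : ℕ} (hk : 0 < k) :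
    IsUnit (1 - C u * X ^ k) := by
  simp [isUnit_iff_constantCoeff, zero_pow hk.ne']

theorem one_sub_C_mul_X_pow_smodEq_one (u : R) {n k : ℕ} (hnk : n ≤ k) :
    1 - C u * X ^ k ≡ 1 [SMOD Ideal.span {X ^ n}] := by
  rw [SModEq.sub_mem, sub_sub_cancel_left, neg_mem_iff, Ideal.mem_span_singleton]
  exact (pow_dvd_pow X hnk).mul_left _

theorem coeff_coeff_eq_of_smodEq {n m a b : ℕ} {f g : R⟦X⟧⟦X⟧}
    (h : f ≡ g [SMOD Ideal.span {X ^ n, C (X ^ m)}]) (ha : a < n) (hb : b < m) :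
    coeff b (coeff a f) = coeff b (coeff a g) := by
  let π := map (Ideal.Quotient.mk (Ideal.span {(X : R⟦X⟧) ^ m}))
  have hle : Ideal.span {X ^ n, C (X ^ m)} ≤ (Ideal.span {X ^ n}).comap π := by
    rw [Ideal.span_le, Set.insert_subset_iff, Set.singleton_subset_iff]
    refine ⟨Ideal.subset_span (by simp [π]), ?_⟩
    rw [SetLike.mem_coe, Ideal.mem_comap, map_C,
      Ideal.Quotient.eq_zero_iff_mem.2 (Ideal.mem_span_singleton_self _), map_zero]
    exact zero_mem _
  have hfg := hle (SModEq.sub_mem.1 h)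
  rw [Ideal.mem_comap, mem_span_X_pow_iff] at hfg
  have := hfg a ha
  rw [coeff_map, Ideal.Quotient.eq_zero_iff_mem, mem_span_X_pow_iff] at this
  simpa [sub_eq_zero] using this b hb

theorem one_sub_C_mul_X_pow_smodEq_one₂ (u : R) {n m h d : ℕ} (hhd : m ≤ h ∨ n ≤ d) :
    1 - C (C u * X ^ h) * X ^ d ≡ 1 [SMOD Ideal.span {X ^ n, C (X ^ m)}] := by
  rw [SModEq.sub_mem, sub_sub_cancel_left, neg_mem_iff]
  rcases hhd with hh | hd
  · obtain ⟨e, rfl⟩ := Nat.exists_eq_add_of_le hh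
    have : C (C u * X ^ (m + e)) * X ^ d = C (X ^ m) * (C (C u * X ^ e) * X ^ d) := by
      simp only [pow_add, map_mul]; ring
    rw [this]
    exact Ideal.mul_mem_right _ _ (Ideal.subset_span (by simp))
  · obtain ⟨e, rfl⟩ := Nat.exists_eq_add_of_le hd
    rw [pow_add, mul_left_comm]
    exact Ideal.mul_mem_right _ _ (Ideal.subset_span (by simp))

theorem constantCoeff_smodEq_of_smodEq₂ {n m : ℕ} (hn : 0 < n) {f g : R⟦X⟧⟦X⟧}
    (h : f ≡ g [SMOD Ideal.span {X ^ n, C (X ^ m)}]) :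
    constantCoeff f ≡ constantCoeff g [SMOD Ideal.span {X ^ m}] := by
  rw [SModEq.sub_mem, mem_span_X_pow_iff]
  intro b hb
  rw [map_sub, sub_eq_zero, ← coeff_zero_eq_constantCoeff_apply,
    ← coeff_zero_eq_constantCoeff_apply]
  exact coeff_coeff_eq_of_smodEq h hn hb

theorem smodEq_one_of_smodEq_one_X_pow_succ {f : ℕ → R⟦X⟧}
    (hf : ∀ m, f m ≡ 1 [SMOD Ideal.span {X ^ (m + 1)}]) {n m : ℕ} (hnm : n ≤ m) :
    f m ≡ 1 [SMOD Ideal.span {X ^ n}] :=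
  (hf m).mono (Ideal.span_singleton_le_span_singleton.2 (pow_dvd_pow X (by omega)))

namespace WithPiTopology

open scoped PowerSeries.WithPiTopology

variable [TopologicalSpace R]

theorem isClosed_span_X_pow [T1Space R] (n : ℕ) :
    IsClosed ((Ideal.span {X ^ n} : Ideal R⟦X⟧) : Set R⟦X⟧) := by
  have : ((Ideal.span {X ^ n} : Ideal R⟦X⟧) : Set R⟦X⟧) =
      ⋂ j ∈ Finset.range n, coeff j ⁻¹' {0} := by
    ext f
    simp [mem_span_X_pow_iff]
  rw [this]
  exact isClosed_biInter fun j _ => isClosed_singleton.preimage (continuous_coeff R j)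

theorem constantCoeff_tsum_eq_zero [T2Space R] {ι : Type*} {f : ι → R⟦X⟧}
    (h : ∀ i, constantCoeff (f i) = 0) : constantCoeff (∑' i, f i) = 0 := by
  by_cases hf : Summable f
  · simp [hf.map_tsum _ (continuous_constantCoeff R), h]
  · rw [tsum_eq_zero_of_not_summable hf, map_zero]

variable [DiscreteTopology R] {ι : Type*}

theorem tendsto_nhds_iff_eventually_coeff_eq {F : ι → R⟦X⟧} {l : Filter ι} {g : R⟦X⟧} :
    Tendsto F l (𝓝 g) ↔ ∀ d, ∀ᶠ i in l, coeff d (F i) = coeff d g := by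
  simp [tendsto_iff_coeff_tendsto, nhds_discrete]

theorem multipliable_of_smodEq_one {f : ι → R⟦X⟧}
    (h : ∀ n, ∃ F : Finset ι, ∀ i ∉ F, f i ≡ 1 [SMOD Ideal.span {X ^ n}]) : Multipliable f := by
  choose F hF using h
  refine ⟨mk fun d => coeff d (∏ i ∈ F (d + 1), f i), ?_⟩
  refine tendsto_nhds_iff_eventually_coeff_eq.2 fun d => eventually_atTop.2 ⟨F (d + 1), ?_⟩
  intro s hs
  rw [coeff_mk]
  exact coeff_eq_of_smodEq (Finset.prod_smodEq_prod_of_subset hs (hF _)) d.lt_succ_self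

theorem multipliable_of_smodEq_one₂ {f : ι → R⟦X⟧⟦X⟧}
    (h : ∀ n m, ∃ F : Finset ι, ∀ i ∉ F, f i ≡ 1 [SMOD Ideal.span {X ^ n, C (X ^ m)}]) :
    Multipliable f := by
  choose F hF using h
  refine ⟨mk fun a => mk fun b => coeff b (coeff a (∏ i ∈ F (a + 1) (b + 1), f i)), ?_⟩
  refine (tendsto_iff_coeff_tendsto _ _ _ _).2 fun a =>
    tendsto_nhds_iff_eventually_coeff_eq.2 fun b => eventually_atTop.2 ⟨F (a + 1) (b + 1), ?_⟩
  intro s hs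
  rw [coeff_mk, coeff_mk]
  exact coeff_coeff_eq_of_smodEq (Finset.prod_smodEq_prod_of_subset hs (hF _ _))
    a.lt_succ_self b.lt_succ_self

theorem multipliable_of_smodEq_one_X_pow_succ {f : ℕ → R⟦X⟧}
    (hf : ∀ m, f m ≡ 1 [SMOD Ideal.span {X ^ (m + 1)}]) : Multipliable f :=
  multipliable_of_smodEq_one fun n => ⟨Finset.range n, fun m hm =>
    smodEq_one_of_smodEq_one_X_pow_succ hf (by simpa using hm)⟩

theorem tprod_smodEq_prod_range {f : ℕ → R⟦X⟧}
    (hf : ∀ m, f m ≡ 1 [SMOD Ideal.span {X ^ (m + 1)}]) (n : ℕ) :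
    ∏' m, f m ≡ ∏ m ∈ Finset.range n, f m [SMOD Ideal.span {X ^ n}] :=
  (multipliable_of_smodEq_one_X_pow_succ hf).hasProd.smodEq_prod (isClosed_span_X_pow n)
    fun m hm => smodEq_one_of_smodEq_one_X_pow_succ hf (by simpa using hm)

theorem constantCoeff_tprod_eq_one {f : ℕ → R⟦X⟧}
    (hf : ∀ m, f m ≡ 1 [SMOD Ideal.span {X ^ (m + 1)}]) :
    constantCoeff (∏' m, f m) = 1 := by
  have h : ∏' m, f m ≡ 1 [SMOD Ideal.span {X ^ 1}] :=
    (tprod_smodEq_prod_range hf 1).trans (by simpa using hf 0)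
  rw [← coeff_zero_eq_constantCoeff_apply, coeff_eq_of_smodEq h zero_lt_one, coeff_zero_one]

end WithPiTopology

end PowerSeries

namespace HahnSeries

theorem coeff_neg_order_mul_leadingCoeff_of_mul_eq_one {Γ R : Type*} [AddCommGroup Γ]
    [LinearOrder Γ] [IsOrderedAddMonoid Γ] [Semiring R] [NoZeroDivisors R] [Nontrivial R]
    {x y : HahnSeries Γ R} (h : y * x = 1) : y.coeff (-x.order) * x.leadingCoeff = 1 := by
  have hx : x ≠ 0 := by rintro rfl; simp at h
  have hy : y ≠ 0 := by rintro rfl; simp at h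
  have hord : y.order = -x.order := by
    have := order_mul hy hx
    rw [h, order_one] at this
    exact eq_neg_of_add_eq_zero_left this.symm
  have := coeff_mul_order_add_order y x
  rwa [h, hord, neg_add_cancel, coeff_one, if_pos rfl, leadingCoeff_eq, hord, eq_comm] at this

theorem order_ofPowerSeries_eq_one {R : Type*} [Semiring R] {φ : PowerSeries R}
    (h0 : PowerSeries.constantCoeff φ = 0) (h1 : PowerSeries.coeff 1 φ ≠ 0) :
    (ofPowerSeries ℤ R φ).order = 1 := by
  have hx1 : (ofPowerSeries ℤ R φ).coeff 1 = PowerSeries.coeff 1 φ := by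
    simpa using ofPowerSeries_apply_coeff φ 1
  have hx : ofPowerSeries ℤ R φ ≠ 0 := ne_of_apply_ne (·.coeff 1) (by simpa [hx1] using h1)
  refine le_antisymm (order_le_of_coeff_ne_zero (hx1 ▸ h1)) ((le_order_iff_forall hx).2 ?_)
  intro j hj
  rcases (Int.lt_iff_add_one_le.1 hj).lt_or_eq with hneg | hzero
  · exact embDomain_of_notMem_range (by rintro ⟨n, hn⟩; simp at hn; omega)
  · obtain rfl : j = 0 := by omega
    simpa [h0] using ofPowerSeries_apply_coeff φ 0

end HahnSeries

open PowerSeries.WithPiTopology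

instance : DiscreteTopology A := ⟨rfl⟩

-- The topologies on `A⟦q⟧` and `A⟦q⟧⟦q̃⟧` fixed above are those of `PowerSeries.WithPiTopology`.

instance : IsTopologicalRing (PowerSeries A) := PowerSeries.WithPiTopology.instIsTopologicalRing A

instance : T2Space (PowerSeries A) := PowerSeries.WithPiTopology.instT2Space A

instance : CharZero A := (RingHom.charZero_iff HahnSeries.C_injective).1 inferInstance

theorem pL_ne_zero : pL ≠ 0 := HahnSeries.single_ne_zero one_ne_zero

theorem pL_zpow_ne_one {k : ℤ} (hk : k ≠ 0) : pL ^ k ≠ 1 := by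
  rw [pL, ← RatFunc.single_zpow]
  intro h
  simpa [hk] using congrArg (HahnSeries.coeff · k) h

theorem pL_sub_two_add_inv : pL - 2 + pL⁻¹ = pL * (1 - pL⁻¹) ^ 2 := by
  linear_combination (2 - pL⁻¹) * mul_inv_cancel₀ pL_ne_zero

theorem pL_sub_two_add_inv_ne_zero : pL - 2 + pL⁻¹ ≠ 0 := by
  rw [pL_sub_two_add_inv]
  refine mul_ne_zero pL_ne_zero (pow_ne_zero 2 (sub_ne_zero.2 ?_))
  simpa using (pL_zpow_ne_one (k := -1) (by norm_num)).symm

theorem mk_natCast_mul_one_sub_X_sq : (mk fun k => (k : ℚ)) * (1 - X) ^ 2 = X := by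
  have h : (mk fun k => (k : ℚ)) = X * mk fun n => ((1 + n).choose 1 : ℚ) := by
    ext (_ | n)
    · simp
    · simp [coeff_succ_X_mul, add_comm]
  rw [h, mul_assoc, mk_add_choose_mul_one_sub_pow_eq_one, mul_one]

theorem sumkpk_mul_pL_sub_two_add_inv : sumkpk * (pL - 2 + pL⁻¹) = 1 := by
  have h := congrArg (HahnSeries.ofPowerSeries ℤ ℚ) mk_natCast_mul_one_sub_X_sq
  rw [map_mul, map_pow, map_sub, map_one, HahnSeries.ofPowerSeries_X] at h
  change sumkpk * (1 - pL) ^ 2 = pL at h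
  linear_combination pL⁻¹ * h + (1 + 2 * sumkpk - sumkpk * pL) * mul_inv_cancel₀ pL_ne_zero

def FsqFactor (m : ℕ) : A⟦X⟧ :=
  (1 - C pL * X ^ (m + 1)) ^ 2 * (1 - C pL⁻¹ * X ^ (m + 1)) ^ 2 *
    Ring.inverse ((1 - (X : A⟦X⟧) ^ (m + 1)) ^ 4)

def DeltaFactor (m : ℕ) : A⟦X⟧ := (1 - (X : A⟦X⟧) ^ (m + 1)) ^ 24

def FsqDeltaFactor (m : ℕ) : A⟦X⟧ :=
  (1 - C pL⁻¹ * X ^ (m + 1)) ^ 2 * (1 - (X : A⟦X⟧) ^ (m + 1)) ^ 20 * (1 - C pL * X ^ (m + 1)) ^ 2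

theorem Fsq_eq : Fsq = -C (pL - 2 + pL⁻¹) * ∏' m, FsqFactor m := rfl

theorem Delta_eq : Delta = X * ∏' m, DeltaFactor m := rfl

theorem FsqFactor_mul_DeltaFactor (m : ℕ) : FsqFactor m * DeltaFactor m = FsqDeltaFactor m := by
  have hu := (isUnit_one_sub_C_mul_X_pow (1 : A) (by omega : 0 < m + 1)).pow 4
  have h := Ring.inverse_mul_cancel _ hu
  rw [map_one, one_mul] at h
  unfold FsqFactor DeltaFactor FsqDeltaFactor
  linear_combination (1 - C pL * X ^ (m + 1)) ^ 2 * (1 - C pL⁻¹ * X ^ (m + 1)) ^ 2 *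
    (1 - (X : A⟦X⟧) ^ (m + 1)) ^ 20 * h

theorem FsqFactor_smodEq_one (m : ℕ) : FsqFactor m ≡ 1 [SMOD Ideal.span {X ^ (m + 1)}] := by
  have hb := fun u : A => one_sub_C_mul_X_pow_smodEq_one u (le_refl (m + 1))
  have hu := (isUnit_one_sub_C_mul_X_pow (1 : A) (by omega : 0 < m + 1)).pow 4
  unfold FsqFactor
  simpa using (((hb pL).pow 2).mul ((hb pL⁻¹).pow 2)).mul
    (Ring.inverse_smodEq_one hu (by simpa using (hb 1).pow 4))

theorem DeltaFactor_smodEq_one (m : ℕ) : DeltaFactor m ≡ 1 [SMOD Ideal.span {X ^ (m + 1)}] := by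
  unfold DeltaFactor
  simpa using (one_sub_C_mul_X_pow_smodEq_one (1 : A) le_rfl).pow 24

theorem FsqDeltaFactor_smodEq_one (m : ℕ) :
    FsqDeltaFactor m ≡ 1 [SMOD Ideal.span {X ^ (m + 1)}] := by
  have hb := fun u : A => one_sub_C_mul_X_pow_smodEq_one u (le_refl (m + 1))
  unfold FsqDeltaFactor
  simpa using (((hb pL⁻¹).pow 2).mul ((hb 1).pow 20)).mul ((hb pL).pow 2)

theorem multipliable_FsqFactor : Multipliable FsqFactor :=
  multipliable_of_smodEq_one_X_pow_succ FsqFactor_smodEq_one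

theorem multipliable_DeltaFactor : Multipliable DeltaFactor :=
  multipliable_of_smodEq_one_X_pow_succ DeltaFactor_smodEq_one

theorem tprod_FsqDeltaFactor_smodEq (n : ℕ) :
    ∏' m, FsqDeltaFactor m ≡ ∏ m ∈ Finset.range n, FsqDeltaFactor m [SMOD Ideal.span {X ^ n}] :=
  tprod_smodEq_prod_range FsqDeltaFactor_smodEq_one n

theorem constantCoeff_tprod_FsqFactor : constantCoeff (∏' m, FsqFactor m) = 1 :=
  constantCoeff_tprod_eq_one FsqFactor_smodEq_one

theorem constantCoeff_tprod_DeltaFactor : constantCoeff (∏' m, DeltaFactor m) = 1 :=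
  constantCoeff_tprod_eq_one DeltaFactor_smodEq_one

theorem Fsq_mul_Delta : Fsq * Delta = -(C (pL - 2 + pL⁻¹) * X * ∏' m, FsqDeltaFactor m) := by
  have hprod : (∏' m, FsqFactor m) * ∏' m, DeltaFactor m = ∏' m, FsqDeltaFactor m := by
    rw [← multipliable_FsqFactor.tprod_mul multipliable_DeltaFactor]
    simp only [FsqFactor_mul_DeltaFactor]
  rw [Fsq_eq, Delta_eq, ← hprod]
  ring

theorem constantCoeff_Fsq : constantCoeff Fsq = -(pL - 2 + pL⁻¹) := by
  simp [Fsq_eq, constantCoeff_tprod_FsqFactor]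

theorem Fsq_ne_zero : Fsq ≠ 0 := fun h =>
  pL_sub_two_add_inv_ne_zero (neg_eq_zero.1 (by rw [← constantCoeff_Fsq, h, map_zero]))

theorem Delta_ne_zero : Delta ≠ 0 := by
  refine Delta_eq ▸ mul_ne_zero X_ne_zero fun h => ?_
  simpa [h] using constantCoeff_tprod_DeltaFactor

theorem constantCoeff_wp : constantCoeff wp = 1 / 12 + sumkpk := by
  rw [wp, map_add, constantCoeff_C]
  refine add_eq_left.2 (constantCoeff_tsum_eq_zero fun kr => ?_)
  simp [zero_pow (Nat.mul_pos kr.1.succ_pos kr.2.succ_pos).ne']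

theorem constantCoeff_Zjac : constantCoeff Zjac = 2 * pL + 20 + 2 * pL⁻¹ := by
  rw [Zjac, map_mul, map_mul, constantCoeff_wp, constantCoeff_Fsq]
  simp only [map_neg, map_ofNat]
  linear_combination 24 * sumkpk_mul_pL_sub_two_add_inv

theorem coeff_constantCoeff_Zjac_one : (constantCoeff Zjac).coeff 1 = 2 := by
  simp [constantCoeff_Zjac, pL, HahnSeries.inv_single, ← HahnSeries.single_zero_ofNat,
    HahnSeries.single_mul_single]

theorem coeff_constantCoeff_Zjac_zero : (constantCoeff Zjac).coeff 0 = 20 := by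
  simp [constantCoeff_Zjac, pL, HahnSeries.inv_single, ← HahnSeries.single_zero_ofNat,
    HahnSeries.single_mul_single]

def chiBase (x : ℤ × ℕ × ℕ) : A⟦X⟧⟦X⟧ := 1 - C (C (pL ^ x.1) * X ^ x.2.1) * X ^ x.2.2

def chiExponent (c : ℤ → ℤ) (x : ℤ × ℕ × ℕ) : ℤ := c (4 * x.2.1 * x.2.2 - x.1 ^ 2)

def chiFactor (c : ℤ → ℤ) (i : chiIndex) : A⟦X⟧⟦X⟧ := fpow (chiBase i) (chiExponent c i)

theorem chi10_eq (c : ℤ → ℤ) : chi10 c = C (C pL * X) * X * ∏' i, chiFactor c i := rfl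

theorem isUnit_chiBase {x : ℤ × ℕ × ℕ} (hx : x ∈ chiIndex) : IsUnit (chiBase x) := by
  obtain ⟨k, _ | h, _ | d⟩ := x
  · have hk : k < 0 := by simpa [chiIndex] using hx
    rw [isUnit_iff_constantCoeff]
    simpa [chiBase, isUnit_iff_constantCoeff, sub_eq_zero] using (pL_zpow_ne_one hk.ne).symm
  all_goals simp [chiBase, isUnit_iff_constantCoeff]

theorem neg_one_le_of_chiExponent_ne_zero {c : ℤ → ℤ} (hc0 : ∀ m : ℤ, m < -1 → c m = 0)
    {x : ℤ × ℕ × ℕ} (hx : chiExponent c x ≠ 0) : -1 ≤ 4 * (x.2.1 : ℤ) * x.2.2 - x.1 ^ 2 :=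
  not_lt.1 fun h => hx (hc0 _ h)

theorem chiFactor_smodEq_one (c : ℤ → ℤ) {n m : ℕ} (i : chiIndex) (hi : m ≤ i.1.2.1 ∨ n ≤ i.1.2.2) :
    chiFactor c i ≡ 1 [SMOD Ideal.span {X ^ n, C (X ^ m)}] :=
  fpow_smodEq_one (isUnit_chiBase i.2) (one_sub_C_mul_X_pow_smodEq_one₂ _ hi) _

theorem multipliable_chiFactor {c : ℤ → ℤ} (hc0 : ∀ m : ℤ, m < -1 → c m = 0) :
    Multipliable (chiFactor c) := by
  classical
  refine multipliable_of_smodEq_one₂ fun n m => ?_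
  let B : ℤ := 4 * m * n + 1
  refine ⟨(Finset.Icc (-B) B ×ˢ Finset.range m ×ˢ Finset.range n).subtype (· ∈ chiIndex), ?_⟩
  rintro ⟨⟨k, h, d⟩, hx⟩ hF
  by_cases he : chiExponent c (k, h, d) = 0
  · simp [chiFactor, he, fpow_zero, SModEq.refl]
  refine chiFactor_smodEq_one c _ ?_
  by_contra! hlt
  have hk := neg_one_le_of_chiExponent_ne_zero hc0 he
  simp only at hk hlt
  have hh : (h : ℤ) < m := by exact_mod_cast hlt.1
  have hd : (d : ℤ) < n := by exact_mod_cast hlt.2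
  apply hF
  simp only [Finset.mem_subtype, Finset.mem_product, Finset.mem_Icc, Finset.mem_range]
  refine ⟨⟨?_, ?_⟩, hlt⟩ <;> nlinarith [Int.le_self_sq k, Int.le_self_sq (-k)]

-- Modulo `q ^ n`, these index the factors of the `q̃`-constant term of `T` that may differ from 1.
open Classical in
def chiIndexConstTerm (n : ℕ) : Finset chiIndex :=
  (({-1, 0, 1} : Finset ℤ) ×ˢ Finset.range (n + 1) ×ˢ {0}).subtype (· ∈ chiIndex)

theorem constantCoeff_chiFactor_smodEq_one {c : ℤ → ℤ} (hc0 : ∀ m : ℤ, m < -1 → c m = 0) {n : ℕ}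
    {i : chiIndex} (hi : i ∉ chiIndexConstTerm n) :
    constantCoeff (chiFactor c i) ≡ 1 [SMOD Ideal.span {X ^ n}] := by
  obtain ⟨⟨k, h, d⟩, hx⟩ := i
  by_cases he : chiExponent c (k, h, d) = 0
  · simp [chiFactor, he, fpow_zero, SModEq.refl]
  suffices hhd : n ≤ h ∨ 1 ≤ d by
    simpa using constantCoeff_smodEq_of_smodEq₂ one_pos (chiFactor_smodEq_one c _ hhd)
  by_contra! hlt
  have hk := neg_one_le_of_chiExponent_ne_zero hc0 he
  obtain rfl : d = 0 := by omega
  apply hi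
  simp only [chiIndexConstTerm, Finset.mem_subtype, Finset.mem_product, Finset.mem_range,
    Finset.mem_singleton, Finset.mem_insert]
  refine ⟨?_, by omega, trivial⟩
  simp only at hk
  have : k ^ 2 ≤ 1 := by omega
  have : -1 ≤ k ∧ k ≤ 1 := by constructor <;> nlinarith
  omega

theorem prod_constantCoeff_chiFactor {c : ℤ → ℤ} (hc₁ : c (-1) = 2) (hc₀ : c 0 = 20) (n : ℕ) :
    ∏ i ∈ chiIndexConstTerm n, constantCoeff (chiFactor c i) =
      C ((1 - pL⁻¹) ^ 2) * ∏ m ∈ Finset.range n, FsqDeltaFactor m := by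
  classical
  let g : ℤ × ℕ × ℕ → A⟦X⟧ := fun x => constantCoeff (fpow (chiBase x) (chiExponent c x))
  change ∏ i ∈ chiIndexConstTerm n, g i = _
  rw [chiIndexConstTerm, Finset.prod_subtype_eq_prod_filter, Finset.prod_filter]
  simp only [Finset.prod_product, Finset.prod_singleton]
  rw [Finset.prod_comm, Finset.prod_range_succ']
  simp [g, chiIndex, chiExponent, chiBase, hc₁, hc₀, fpow_of_nonneg, FsqDeltaFactor]
  rw [mul_comm]
  simp only [mul_assoc]

theorem constantCoeff_tprod_chiFactor {c : ℤ → ℤ} (hc0 : ∀ m : ℤ, m < -1 → c m = 0)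
    (hc₁ : c (-1) = 2) (hc₀ : c 0 = 20) :
    constantCoeff (∏' i, chiFactor c i) = C ((1 - pL⁻¹) ^ 2) * ∏' m, FsqDeltaFactor m := by
  have hprod : HasProd (fun i => constantCoeff (chiFactor c i))
      (constantCoeff (∏' i, chiFactor c i)) :=
    (multipliable_chiFactor hc0).hasProd.map constantCoeff (continuous_constantCoeff _)
  refine eq_of_forall_smodEq fun n => ?_
  calc constantCoeff (∏' i, chiFactor c i)
      ≡ ∏ i ∈ chiIndexConstTerm n, constantCoeff (chiFactor c i) [SMOD Ideal.span {X ^ n}] :=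
        hprod.smodEq_prod (isClosed_span_X_pow n) fun _ => constantCoeff_chiFactor_smodEq_one hc0
    _ = C ((1 - pL⁻¹) ^ 2) * ∏ m ∈ Finset.range n, FsqDeltaFactor m :=
        prod_constantCoeff_chiFactor hc₁ hc₀ n
    _ ≡ C ((1 - pL⁻¹) ^ 2) * ∏' m, FsqDeltaFactor m [SMOD Ideal.span {X ^ n}] :=
        SModEq.rfl.mul (tprod_FsqDeltaFactor_smodEq n).symm

theorem coeff_one_chi10 {c : ℤ → ℤ} (hc0 : ∀ m : ℤ, m < -1 → c m = 0) (hc₁ : c (-1) = 2)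
    (hc₀ : c 0 = 20) : coeff 1 (chi10 c) = -(Fsq * Delta) := by
  rw [chi10_eq, Fsq_mul_Delta, pL_sub_two_add_inv]
  simp only [mul_right_comm _ X, coeff_succ_mul_X, coeff_zero_eq_constantCoeff, map_mul,
    constantCoeff_C, constantCoeff_tprod_chiFactor hc0 hc₁ hc₀]
  ring

theorem psi_neg_one_mul_coeff_one_chi10 {c : ℤ → ℤ} (h1 : coeff 1 (chi10 c) ≠ 0) :
    psi c (-1) * ιR (coeff 1 (chi10 c)) = 1 := by
  have hφ1 : coeff 1 (map ιR (chi10 c)) ≠ 0 := by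
    rw [coeff_map]
    exact (map_ne_zero_iff ιR HahnSeries.ofPowerSeries_injective).2 h1
  have hx1 : (chiM c).coeff 1 = ιR (coeff 1 (chi10 c)) := by
    rw [← coeff_map]
    exact_mod_cast HahnSeries.ofPowerSeries_apply_coeff (map ιR (chi10 c)) 1
  have horder : (chiM c).order = 1 :=
    HahnSeries.order_ofPowerSeries_eq_one (by simp [chi10_eq]) hφ1
  have hne : chiM c ≠ 0 := fun h => by simp [h] at horder
  have key := HahnSeries.coeff_neg_order_mul_leadingCoeff_of_mul_eq_one (inv_mul_cancel₀ hne)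
  rw [HahnSeries.leadingCoeff_eq, horder, hx1] at key
  exact key

/-- The leading Fourier–Jacobi coefficient of `1/χ₁₀` is the Katz–Klemm–Vafa series:
`ψ_{−1} = −1/(Fsq·Δ)`, equivalently `ψ_{−1}·Fsq·Δ = −1`. -/
theorem psi_neg_one_eq_KKV (c : ℤ → ℤ)
    (hc0 : ∀ m : ℤ, m < -1 → c m = 0)
    (hc : ∀ n : ℕ, ∀ k : ℤ, (PowerSeries.coeff (R := A) n Zjac).coeff k = ((c (4 * n - k ^ 2) : ℤ) : ℚ)) :
    psi c (-1) * ιR Fsq * ιR Delta = -1 := by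
  have hc₁ : c (-1) = 2 := by
    have h := hc 0 1
    rw [coeff_zero_eq_constantCoeff_apply, coeff_constantCoeff_Zjac_one] at h
    exact_mod_cast (by simpa using h.symm : (c (-1) : ℚ) = 2)
  have hc₀ : c 0 = 20 := by
    have h := hc 0 0
    rw [coeff_zero_eq_constantCoeff_apply, coeff_constantCoeff_Zjac_zero] at h
    exact_mod_cast (by simpa using h.symm : (c 0 : ℚ) = 20)
  have hcoeff := coeff_one_chi10 hc0 hc₁ hc₀
  have hpsi := psi_neg_one_mul_coeff_one_chi10 (c := c)
    (hcoeff ▸ neg_ne_zero.2 (mul_ne_zero Fsq_ne_zero Delta_ne_zero))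
  rw [hcoeff, map_neg, map_mul] at hpsi
  linear_combination -hpsi

end
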